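/- In the presented group Π = ⟨a, b ∣ [a³, b] = 1, ab² = ba²⟩, the images of both a³ and b³ lie in the center of Π. -/

import Mathlib

/-! `a³` is central by the first relation; for `b³`, conjugating `ab² = ba²` by `a` and using
that `a³` commutes with `b` gives `b²a = a²b`, whence `b³a = b·a²b = ab²·b = ab³`. -/

open scoped commutatorElement

/-- Relators of `Π = ⟨a, b ∣ [a³, b] = 1, ab² = ba²⟩`, with `a = 0`, `b = 1`. -/
def relsC3C2 : Set (FreeGroup (Fin 2)) :=
  {⁅(FreeGroup.of 0 : FreeGroup (Fin 2)) ^ 3, FreeGroup.of 1⁆,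
   FreeGroup.of 0 * FreeGroup.of 1 ^ 2 * (FreeGroup.of 1 * FreeGroup.of 0 ^ 2)⁻¹}

theorem PresentedGroup.mem_center_iff {α : Type*} {rels : Set (FreeGroup α)}
    {z : PresentedGroup rels} :
    z ∈ Subgroup.center (PresentedGroup rels) ↔ ∀ i, Commute (PresentedGroup.of i) z := by
  rw [← Subgroup.centralizer_univ, ← Subgroup.coe_top, ← PresentedGroup.closure_range_of,
    Subgroup.centralizer_closure, Subgroup.mem_centralizer_iff, Set.forall_mem_range]
  rfl

theorem sq_mul_eq_sq_mul_of_mul_sq_eq {G : Type*} [Group G] {a b : G}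
    (hcomm : Commute (a ^ 3) b) (hrel : a * b ^ 2 = b * a ^ 2) : b ^ 2 * a = a ^ 2 * b :=
  calc b ^ 2 * a = a⁻¹ * (a * b ^ 2) * a := by group
    _ = a⁻¹ * (b * a ^ 3) := by rw [hrel]; group
    _ = a ^ 2 * b := by rw [← hcomm.eq]; group

theorem commute_pow_three_of_mul_sq_eq {G : Type*} [Group G] {a b : G}
    (hcomm : Commute (a ^ 3) b) (hrel : a * b ^ 2 = b * a ^ 2) : Commute a (b ^ 3) :=
  calc a * b ^ 3 = (a * b ^ 2) * b := by group
    _ = b * (a ^ 2 * b) := by rw [hrel]; group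
    _ = b ^ 3 * a := by rw [← sq_mul_eq_sq_mul_of_mul_sq_eq hcomm hrel]; group

theorem relsC3C2.commute_pow_three :
    Commute ((PresentedGroup.of 0 : PresentedGroup relsC3C2) ^ 3) (PresentedGroup.of 1) := by
  have h := PresentedGroup.one_of_mem (Set.mem_insert _ _ : _ ∈ relsC3C2)
  rwa [map_commutatorElement, commutatorElement_eq_one_iff_commute] at h

theorem relsC3C2.mul_sq_eq :
    (PresentedGroup.of 0 : PresentedGroup relsC3C2) * PresentedGroup.of 1 ^ 2 =
      PresentedGroup.of 1 * PresentedGroup.of 0 ^ 2 :=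
  PresentedGroup.mk_eq_mk_of_mul_inv_mem (Set.mem_insert_of_mem _ rfl)

/-- In `Π = ⟨a, b ∣ [a³, b] = 1, ab² = ba²⟩`, both `a³` and `b³` are central. -/
theorem stmt_16 :
    (PresentedGroup.of 0 : PresentedGroup relsC3C2) ^ 3 ∈
        Subgroup.center (PresentedGroup relsC3C2) ∧
    (PresentedGroup.of 1 : PresentedGroup relsC3C2) ^ 3 ∈
        Subgroup.center (PresentedGroup relsC3C2) := by
  simp only [PresentedGroup.mem_center_iff, Fin.forall_fin_two]
  exact ⟨⟨(Commute.refl _).pow_right 3, relsC3C2.commute_pow_three.symm⟩,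
    ⟨commute_pow_three_of_mul_sq_eq relsC3C2.commute_pow_three relsC3C2.mul_sq_eq,
      (Commute.refl _).pow_right 3⟩⟩
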